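/- arXiv:1302.1958 — 7 statements merged into one kernel-verified Lean document; each statement's English description precedes it below -/
import Mathlib

section
/- Let a, b be 2×2 complex matrices such that D_ξ(b) ≤ D_ξ(a) for all unit vectors ξ ∈ ℂ², where D_ξ(x) = ‖xξ‖² − |⟨xξ, ξ⟩|². Then there exist scalars θ, τ ∈ ℂ with |θ| ≤ 1 such that b = θa + τ·1. -/
open scoped InnerProductSpace

/-! For a unit vector `ξ`, Lagrange's identity `‖ξ‖²‖η‖² = |⟪η, ξ⟫|² + |ξ₀η₁ - ξ₁η₀|²` turns
`D_ξ(T)` into `|ξ₀(Tξ)₁ - ξ₁(Tξ)₀|²`, the square of a binary quadratic form in `(ξ₀, ξ₁)` whose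
coefficients `(T₁₀, T₁₁ - T₀₀, -T₀₁)` all vanish exactly when `T` is scalar. By homogeneity the
hypothesis becomes `|q_b| ≤ |q_a|` on all of `ℂ²`. A unimodular change of variables brings `q_a`
to a diagonal form `A x² + C y²` with `A ≠ 0`; then `q_b` vanishes at the zeros of `q_a`, to
second order at a double zero, which forces `q_b = θ q_a` with `θ = A'/A`, and `|θ| ≤ 1`.
Hence `b - θ a` is scalar. -/

def quadForm (A B C x y : ℂ) : ℂ := A * x ^ 2 + B * x * y + C * y ^ 2

theorem quadForm_linear_subst (A B C α β γ δ x y : ℂ) :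
    quadForm A B C (α * x + β * y) (γ * x + δ * y) =
      quadForm (quadForm A B C α γ) (2 * A * α * β + B * (α * δ + β * γ) + 2 * C * γ * δ)
        (quadForm A B C β δ) x y := by
  simp only [quadForm]
  ring

theorem forall_of_forall_linear_subst {P : ℂ → ℂ → Prop} {α β γ δ : ℂ}
    (hdet : α * δ - β * γ = 1) (h : ∀ x y, P (α * x + β * y) (γ * x + δ * y)) (x y : ℂ) :
    P x y := by
  convert h (δ * x - β * y) (α * y - γ * x) using 1
  · linear_combination (-x) * hdet
  · linear_combination (-y) * hdet

theorem eq_zero_of_norm_mul_le_mul_norm_sq {b : ℂ} {M : ℝ}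
    (h : ∀ x : ℂ, ‖b * x‖ ≤ M * ‖x‖ ^ 2) : b = 0 := by
  by_contra hb0
  have hb : 0 < ‖b‖ := norm_pos_iff.mpr hb0
  have hM : 0 < M := by simpa using hb.trans_le (by simpa using h 1)
  have hx := h (‖b‖ / (2 * M) : ℝ)
  rw [norm_mul, Complex.norm_real, Real.norm_of_nonneg (by positivity)] at hx
  field_simp at hx
  nlinarith [pow_pos hb 3]

theorem quadForm_eq_div_mul_of_norm_le_diagonal {A C A' B' C' : ℂ} (hA : A ≠ 0)
    (h : ∀ x y, ‖quadForm A' B' C' x y‖ ≤ ‖quadForm A 0 C x y‖) (x y : ℂ) :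
    quadForm A' B' C' x y = A' / A * quadForm A 0 C x y := by
  obtain ⟨t, ht⟩ := IsAlgClosed.exists_pow_nat_eq (-C / A) two_pos
  have hC : C = -A * t ^ 2 := by rw [ht]; field_simp
  have vanish : ∀ s, s ^ 2 = t ^ 2 → quadForm A' B' C' s 1 = 0 := fun s hs =>
    norm_le_zero_iff.mp <| (h s 1).trans_eq <| by simp [quadForm, hC, hs]
  have hplus := vanish t rfl
  have hminus := vanish (-t) (neg_sq t)
  simp only [quadForm] at hplus hminus
  have hC' : C' = -A' * t ^ 2 := by linear_combination (hplus + hminus) / 2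
  have hB' : B' = 0 := by
    rcases eq_or_ne t 0 with rfl | ht0
    -- `A x² + C y² = A x²` has a double zero, which `A' x² + B' x y` must share to second order
    · refine eq_zero_of_norm_mul_le_mul_norm_sq (M := ‖A‖ + ‖A'‖) fun s => ?_
      have hs : ‖A' * s ^ 2 + B' * s‖ ≤ ‖A * s ^ 2‖ := by simpa [quadForm, hC, hC'] using h s 1
      calc ‖B' * s‖ = ‖(A' * s ^ 2 + B' * s) - A' * s ^ 2‖ := by ring_nf
        _ ≤ ‖A * s ^ 2‖ + ‖A' * s ^ 2‖ := (norm_sub_le _ _).trans (by gcongr)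
        _ = (‖A‖ + ‖A'‖) * ‖s‖ ^ 2 := by simp only [norm_mul, norm_pow]; ring
    · have hBt : B' * t = 0 := by linear_combination (hplus - hminus) / 2
      exact (mul_eq_zero.mp hBt).resolve_right ht0
  simp only [quadForm, hB', hC', hC]
  field_simp
  ring

theorem exists_eq_mul_of_norm_quadForm_le {A B C A' B' C' : ℂ}
    (h : ∀ x y, ‖quadForm A' B' C' x y‖ ≤ ‖quadForm A B C x y‖) :
    ∃ θ : ℂ, ‖θ‖ ≤ 1 ∧ A' = θ * A ∧ B' = θ * B ∧ C' = θ * C := by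
  suffices ∃ θ : ℂ, ‖θ‖ ≤ 1 ∧ ∀ x y, quadForm A' B' C' x y = θ * quadForm A B C x y by
    obtain ⟨θ, hθ, hq⟩ := this
    have h10 := hq 1 0
    have h01 := hq 0 1
    have h11 := hq 1 1
    simp only [quadForm] at h10 h01 h11
    exact ⟨θ, hθ, by linear_combination h10, by linear_combination h11 - h10 - h01,
      by linear_combination h01⟩
  by_cases hf : ∀ t, quadForm A B C 1 t = 0
  · have h0 := hf 0
    have h1 := hf 1
    have h2 := hf (-1)
    simp only [quadForm] at h0 h1 h2
    obtain ⟨rfl, rfl, rfl⟩ : A = 0 ∧ B = 0 ∧ C = 0 :=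
      ⟨by linear_combination h0, by linear_combination (h1 - h2) / 2,
        by linear_combination (h1 + h2) / 2 - h0⟩
    refine ⟨0, by simp, fun x y => ?_⟩
    simpa [quadForm] using h x y
  push Not at hf
  obtain ⟨t, ht⟩ := hf
  -- the unimodular substitution `(x, y) ↦ (x + s y, t x + (1 + t s) y)` kills the `x y` term
  set s := -(B + 2 * C * t) / (2 * quadForm A B C 1 t)
  have hdiag : 2 * A * 1 * s + B * (1 * (1 + t * s) + s * t) + 2 * C * t * (1 + t * s) = 0 := by
    simp only [s]
    field_simp
    simp only [quadForm]
    ring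
  have hsubst := fun x y => h (1 * x + s * y) (t * x + (1 + t * s) * y)
  simp only [quadForm_linear_subst, hdiag] at hsubst
  refine ⟨quadForm A' B' C' 1 t / quadForm A B C 1 t, ?_, ?_⟩
  · rw [norm_div]
    exact div_le_one_of_le₀ (h 1 t) (norm_nonneg _)
  · refine forall_of_forall_linear_subst (α := 1) (β := s) (γ := t) (δ := 1 + t * s) (by ring)
      fun x y => ?_
    rw [quadForm_linear_subst, quadForm_linear_subst, hdiag]
    exact quadForm_eq_div_mul_of_norm_le_diagonal ht hsubst x y

def cross (ξ η : EuclideanSpace ℂ (Fin 2)) : ℂ := ξ 0 * η 1 - ξ 1 * η 0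

theorem norm_sq_mul_norm_sq_eq_norm_inner_sq_add_norm_cross_sq (ξ η : EuclideanSpace ℂ (Fin 2)) :
    ‖ξ‖ ^ 2 * ‖η‖ ^ 2 = ‖⟪η, ξ⟫_ℂ‖ ^ 2 + ‖cross ξ η‖ ^ 2 := by
  simp only [EuclideanSpace.norm_sq_eq, PiLp.inner_apply, Fin.sum_univ_two, cross, Complex.sq_norm,
    Complex.normSq_apply, RCLike.inner_apply, Complex.add_re, Complex.add_im, Complex.sub_re,
    Complex.sub_im, Complex.mul_re, Complex.mul_im, Complex.conj_re, Complex.conj_im]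
  ring

theorem cross_smul_map_smul (T : EuclideanSpace ℂ (Fin 2) →L[ℂ] EuclideanSpace ℂ (Fin 2))
    (c : ℂ) (ξ : EuclideanSpace ℂ (Fin 2)) : cross (c • ξ) (T (c • ξ)) = c ^ 2 * cross ξ (T ξ) := by
  simp only [cross, map_smul, PiLp.smul_apply, smul_eq_mul]
  ring

theorem norm_cross_le_of_variance_le {a b : EuclideanSpace ℂ (Fin 2) →L[ℂ] EuclideanSpace ℂ (Fin 2)}
    (h : ∀ ξ : EuclideanSpace ℂ (Fin 2), ‖ξ‖ = 1 →
      ‖b ξ‖ ^ 2 - ‖(⟪b ξ, ξ⟫_ℂ)‖ ^ 2 ≤ ‖a ξ‖ ^ 2 - ‖(⟪a ξ, ξ⟫_ℂ)‖ ^ 2)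
    (ξ : EuclideanSpace ℂ (Fin 2)) : ‖cross ξ (b ξ)‖ ≤ ‖cross ξ (a ξ)‖ := by
  rcases eq_or_ne ξ 0 with rfl | hξ
  · simp [cross]
  set u := (‖ξ‖ : ℂ)⁻¹ • ξ
  have hu : ‖u‖ = 1 := norm_smul_inv_norm hξ
  have hξu : ξ = (‖ξ‖ : ℂ) • u := by simp [u, smul_smul, hξ]
  clear_value u
  have variance_eq (T : EuclideanSpace ℂ (Fin 2) →L[ℂ] EuclideanSpace ℂ (Fin 2)) :
      ‖T u‖ ^ 2 - ‖⟪T u, u⟫_ℂ‖ ^ 2 = ‖cross u (T u)‖ ^ 2 := by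
    have := norm_sq_mul_norm_sq_eq_norm_inner_sq_add_norm_cross_sq u (T u)
    rw [hu] at this
    linarith
  have hunit := h u hu
  rw [variance_eq, variance_eq] at hunit
  rw [hξu, cross_smul_map_smul, cross_smul_map_smul, norm_mul, norm_mul]
  gcongr
  exact (pow_le_pow_iff_left₀ (norm_nonneg _) (norm_nonneg _) two_ne_zero).mp hunit

theorem cross_toEuclideanCLM (M : Matrix (Fin 2) (Fin 2) ℂ) (ξ : EuclideanSpace ℂ (Fin 2)) :
    cross ξ (Matrix.toEuclideanCLM (𝕜 := ℂ) M ξ) =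
      quadForm (M 1 0) (M 1 1 - M 0 0) (-M 0 1) (ξ 0) (ξ 1) := by
  simp only [cross, quadForm, Matrix.ofLp_toEuclideanCLM, Matrix.mulVec, dotProduct,
    Fin.sum_univ_two]
  ring

theorem Matrix.eq_smul_add_smul_one_of_fin_two {M N : Matrix (Fin 2) (Fin 2) ℂ} {θ : ℂ}
    (h10 : N 1 0 = θ * M 1 0) (h01 : -N 0 1 = θ * -M 0 1)
    (hdiag : N 1 1 - N 0 0 = θ * (M 1 1 - M 0 0)) :
    N = θ • M + (N 0 0 - θ * M 0 0) • 1 := by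
  ext i j
  fin_cases i <;> fin_cases j <;>
    simp only [Fin.zero_eta, Fin.mk_one, Fin.isValue, add_apply, smul_apply, smul_eq_mul,
      one_apply_eq, one_apply_ne zero_ne_one, one_apply_ne one_ne_zero, mul_one, mul_zero, add_zero]
  · ring
  · linear_combination -h01
  · linear_combination h10
  · linear_combination hdiag

/-- If `D_ξ(b) ≤ D_ξ(a)` for all unit vectors of `ℂ²`, then `b = θa + τ·1`
with `|θ| ≤ 1`. -/
theorem stmt_4
    (a b : EuclideanSpace ℂ (Fin 2) →L[ℂ] EuclideanSpace ℂ (Fin 2))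
    (h : ∀ ξ : EuclideanSpace ℂ (Fin 2), ‖ξ‖ = 1 →
      ‖b ξ‖ ^ 2 - ‖(⟪b ξ, ξ⟫_ℂ)‖ ^ 2 ≤ ‖a ξ‖ ^ 2 - ‖(⟪a ξ, ξ⟫_ℂ)‖ ^ 2) :
    ∃ θ τ : ℂ, ‖θ‖ ≤ 1 ∧ b = θ • a + τ • (1 : EuclideanSpace ℂ (Fin 2) →L[ℂ] EuclideanSpace ℂ (Fin 2)) := by
  obtain ⟨M, rfl⟩ := EquivLike.surjective (Matrix.toEuclideanCLM (𝕜 := ℂ) (n := Fin 2)) a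
  obtain ⟨N, rfl⟩ := EquivLike.surjective (Matrix.toEuclideanCLM (𝕜 := ℂ) (n := Fin 2)) b
  have hquad (x y : ℂ) : ‖quadForm (N 1 0) (N 1 1 - N 0 0) (-N 0 1) x y‖ ≤
      ‖quadForm (M 1 0) (M 1 1 - M 0 0) (-M 0 1) x y‖ := by
    have hxy := norm_cross_le_of_variance_le h !₂[x, y]
    rwa [cross_toEuclideanCLM, cross_toEuclideanCLM] at hxy
  obtain ⟨θ, hθ, h10, hdiag, h01⟩ := exists_eq_mul_of_norm_quadForm_le hquad
  refine ⟨θ, N 0 0 - θ * M 0 0, hθ, ?_⟩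
  conv_lhs => rw [Matrix.eq_smul_add_smul_one_of_fin_two h10 h01 hdiag]
  rw [map_add, map_smul, map_smul, map_one]
end

section
/- Let a be a normal bounded operator on a complex Hilbert space H and f : σ(a) → ℂ a function satisfying |f(μ) − f(λ)| ≤ κ|μ − λ| for all λ, μ ∈ σ(a) and some constant κ > 0. Then b = f(a) (defined by continuous functional calculus) satisfies D_ξ(b) ≤ κ² D_ξ(a) for all unit vectors ξ ∈ H. -/
/-!
Let `ν` be the spectral measure of `a` in the state `ξ`, so that `⟪ξ, u(a) ξ⟫ = ∫ u dν`. Then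
`D_ξ(g(a)) = ½ ∬ |g λ - g μ|² dν(λ) dν(μ)`, and the Lipschitz bound on `f` passes under the
integral. To stay within the continuous functional calculus we integrate one variable at a time:
for fixed `μ ∈ σ(a)`, `∫ |f λ - f μ|² dν(λ) = ‖(b - f μ) ξ‖²` is at most `κ² ‖(a - μ) ξ‖²`, and
integrating `μ ↦ ‖(g(a) - g μ) ξ‖²` against `ν` gives `2 D_ξ(g(a))`.
-/

open scoped InnerProductSpace ComplexOrder

section

variable {H : Type*} [NormedAddCommGroup H] [InnerProductSpace ℂ H]

/-- The paper's `D_ξ(x)`. -/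
noncomputable def vectorVariance (ξ : H) (x : H →L[ℂ] H) : ℝ :=
  ‖x ξ‖ ^ 2 - ‖⟪x ξ, ξ⟫_ℂ‖ ^ 2

theorem norm_apply_sub_smul_sq {ξ : H} (hξ : ‖ξ‖ = 1) (x : H →L[ℂ] H) (c : ℂ) :
    ‖x ξ - c • ξ‖ ^ 2 = vectorVariance ξ x + ‖⟪ξ, x ξ⟫_ℂ - c‖ ^ 2 := by
  rw [vectorVariance, @norm_sub_sq ℂ, inner_smul_right, norm_smul, hξ, ← inner_conj_symm]
  simp only [mul_one, RCLike.re_to_complex, Complex.sq_norm, Complex.normSq_apply, Complex.mul_re,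
    Complex.sub_re, Complex.sub_im, Complex.conj_re, Complex.conj_im]
  ring

variable [CompleteSpace H]

/-- `∫ u dν` for the spectral measure `ν` of `a` in the state `ξ`, written as `⟪ξ, u(a) ξ⟫`. -/
noncomputable def spectralMean (a : H →L[ℂ] H) (ξ : H) (u : ℂ → ℝ) : ℝ :=
  (⟪ξ, cfc (fun z => (u z : ℂ)) a ξ⟫_ℂ).re

variable (a : H →L[ℂ] H) (ξ : H) {u v : ℂ → ℝ}

theorem spectralMean_mono (hu : ContinuousOn u (spectrum ℂ a))
    (hv : ContinuousOn v (spectrum ℂ a)) (huv : ∀ z ∈ spectrum ℂ a, u z ≤ v z) :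
    spectralMean a ξ u ≤ spectralMean a ξ v := by
  have hle : cfc (fun z => (u z : ℂ)) a ≤ cfc (fun z => (v z : ℂ)) a :=
    cfc_mono (fun z hz => Complex.real_le_real.mpr (huv z hz))
  have hpos := (ContinuousLinearMap.nonneg_iff_isPositive _).mp (sub_nonneg.mpr hle)
  simpa [spectralMean, inner_sub_right] using hpos.re_inner_nonneg_right ξ

theorem spectralMean_const_mul (r : ℝ) (hu : ContinuousOn u (spectrum ℂ a)) :
    spectralMean a ξ (fun z => r * u z) = r * spectralMean a ξ u := by
  simp only [spectralMean, Complex.ofReal_mul]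
  rw [cfc_const_mul _ _ a]
  simp

theorem spectralMean_const_add [IsStarNormal a] {ξ : H} (hξ : ‖ξ‖ = 1) (r : ℝ)
    (hu : ContinuousOn u (spectrum ℂ a)) :
    spectralMean a ξ (fun z => r + u z) = r + spectralMean a ξ u := by
  simp only [spectralMean, Complex.ofReal_add]
  rw [cfc_const_add _ _ a]
  simp [Algebra.algebraMap_eq_smul_one, hξ]

theorem spectralMean_norm_sq {g : ℂ → ℂ} (hg : ContinuousOn g (spectrum ℂ a)) :
    spectralMean a ξ (fun z => ‖g z‖ ^ 2) = ‖cfc g a ξ‖ ^ 2 := by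
  have h : cfc (fun z => ((‖g z‖ ^ 2 : ℝ) : ℂ)) a = star (cfc g a) * cfc g a := by
    rw [← cfc_star, ← cfc_mul _ _ a]
    refine cfc_congr fun z _ => ?_
    simp [Complex.conj_mul']
  rw [spectralMean, h, mul_apply_eq_comp, ContinuousLinearMap.star_eq_adjoint,
    ContinuousLinearMap.adjoint_inner_right, inner_self_eq_norm_sq_to_K]
  norm_cast

theorem spectralMean_norm_sub_sq [IsStarNormal a] {g : ℂ → ℂ}
    (hg : ContinuousOn g (spectrum ℂ a)) (c : ℂ) :
    spectralMean a ξ (fun z => ‖g z - c‖ ^ 2) = ‖cfc g a ξ - c • ξ‖ ^ 2 := by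
  rw [spectralMean_norm_sq a ξ (g := fun z => g z - c) (by fun_prop), cfc_sub _ _ a,
    cfc_const c a]
  simp [Algebra.algebraMap_eq_smul_one]

theorem spectralMean_norm_cfc_apply_sub_sq [IsStarNormal a] {ξ : H} (hξ : ‖ξ‖ = 1)
    {g : ℂ → ℂ} (hg : ContinuousOn g (spectrum ℂ a)) :
    spectralMean a ξ (fun z => ‖cfc g a ξ - g z • ξ‖ ^ 2) = 2 * vectorVariance ξ (cfc g a) := by
  set m := ⟪ξ, cfc g a ξ⟫_ℂ
  have h : (fun z => ‖cfc g a ξ - g z • ξ‖ ^ 2) =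
      fun z => vectorVariance ξ (cfc g a) + ‖g z - m‖ ^ 2 := by
    funext z
    rw [norm_apply_sub_smul_sq hξ, norm_sub_rev]
  rw [h, spectralMean_const_add a hξ _ (by fun_prop), spectralMean_norm_sub_sq a ξ hg,
    norm_apply_sub_smul_sq hξ, sub_self, norm_zero]
  ring

theorem norm_cfc_apply_sub_smul_sq_le [IsStarNormal a] {f : ℂ → ℂ} {κ : ℝ}
    (hf : ∀ w ∈ spectrum ℂ a, ∀ z ∈ spectrum ℂ a, ‖f z - f w‖ ≤ κ * ‖z - w‖)
    (hfc : ContinuousOn f (spectrum ℂ a)) {μ : ℂ} (hμ : μ ∈ spectrum ℂ a) :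
    ‖cfc f a ξ - f μ • ξ‖ ^ 2 ≤ κ ^ 2 * ‖a ξ - μ • ξ‖ ^ 2 := by
  have hid := spectralMean_norm_sub_sq a ξ (g := fun z => z) continuousOn_id μ
  rw [cfc_id' ℂ a] at hid
  rw [← spectralMean_norm_sub_sq a ξ hfc, ← hid, ← spectralMean_const_mul a ξ _ (by fun_prop)]
  refine spectralMean_mono a ξ (by fun_prop) (by fun_prop) fun z hz => ?_
  rw [← mul_pow]
  exact pow_le_pow_left₀ (norm_nonneg _) (hf μ hμ z hz) 2

end

theorem stmt_8_general {H : Type*} [NormedAddCommGroup H] [InnerProductSpace ℂ H]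
    [CompleteSpace H] (a : H →L[ℂ] H) [IsStarNormal a]
    (f : ℂ → ℂ) (κ : ℝ)
    (hf : ∀ lam ∈ spectrum ℂ a, ∀ mu ∈ spectrum ℂ a,
      ‖f mu - f lam‖ ≤ κ * ‖mu - lam‖) :
    ∀ ξ : H, ‖ξ‖ = 1 →
      ‖(cfc f a) ξ‖ ^ 2 - ‖(⟪(cfc f a) ξ, ξ⟫_ℂ)‖ ^ 2
        ≤ κ ^ 2 * (‖a ξ‖ ^ 2 - ‖(⟪a ξ, ξ⟫_ℂ)‖ ^ 2) := by
  intro ξ hξ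
  have hfc : ContinuousOn f (spectrum ℂ a) :=
    (LipschitzOnWith.of_dist_le' fun z hz w hw => by
      simpa only [dist_eq_norm] using hf w hw z hz).continuousOn
  have hid := spectralMean_norm_cfc_apply_sub_sq a hξ (g := fun z => z) continuousOn_id
  simp only [cfc_id' ℂ a] at hid
  have key := spectralMean_mono a ξ (by fun_prop) (by fun_prop)
    fun μ hμ => norm_cfc_apply_sub_smul_sq_le a ξ hf hfc hμ
  rw [spectralMean_norm_cfc_apply_sub_sq a hξ hfc, spectralMean_const_mul a ξ _ (by fun_prop),
    hid] at key
  change vectorVariance ξ (cfc f a) ≤ κ ^ 2 * vectorVariance ξ a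
  linarith

/-- If `a` is normal and `f` is `κ`-Lipschitz on `σ(a)`, then `b = f(a)`
satisfies `D_ξ(b) ≤ κ² D_ξ(a)` for all unit vectors `ξ`. -/
theorem stmt_8 {H : Type*} [NormedAddCommGroup H] [InnerProductSpace ℂ H]
    [CompleteSpace H] (a : H →L[ℂ] H) [IsStarNormal a]
    (f : ℂ → ℂ) (κ : ℝ) (hκ : 0 < κ)
    (hf : ∀ lam ∈ spectrum ℂ a, ∀ mu ∈ spectrum ℂ a,
      ‖f mu - f lam‖ ≤ κ * ‖mu - lam‖) :
    ∀ ξ : H, ‖ξ‖ = 1 →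
      ‖(cfc f a) ξ‖ ^ 2 - ‖(⟪(cfc f a) ξ, ξ⟫_ℂ)‖ ^ 2
        ≤ κ ^ 2 * (‖a ξ‖ ^ 2 - ‖(⟪a ξ, ξ⟫_ℂ)‖ ^ 2) :=
  stmt_8_general a f κ hf
end

section
/- Let S, T : X → Y be bounded linear operators between Banach spaces. The range inclusion T*(Y*) ⊆ S*(Y*) of the adjoint maps holds if and only if there exists a constant κ > 0 such that ‖Tξ‖ ≤ κ‖Sξ‖ for all ξ ∈ X. -/
/-! If every `g ∘ T` factors as `ψ ∘ S`, then each functional `g` is bounded (by `‖ψ‖`) on the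
vectors `‖S ξ‖⁻¹ • T ξ`; by the uniform boundedness principle on the Banach space `Y*` these
vectors are bounded in norm, while `T` kills `ker S` because functionals separate points.
Conversely, `‖T ξ‖ ≤ κ ‖S ξ‖` makes `S ξ ↦ g (T ξ)` a well-defined bounded functional on the
range of `S`, and Hahn–Banach extends it to `Y`. -/

open NormedSpace

namespace LinearMap

variable {R M N P : Type*} [Ring R] [AddCommGroup M] [Module R M] [AddCommGroup N] [Module R N]
  [AddCommGroup P] [Module R P]

theorem exists_comp_rangeRestrict_eq_of_ker_le (f : M →ₗ[R] N) (g : M →ₗ[R] P)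
    (h : ker f ≤ ker g) : ∃ g' : range f →ₗ[R] P, g' ∘ₗ f.rangeRestrict = g :=
  ⟨(ker f).liftQ g h ∘ₗ f.quotKerEquivRange.symm.toLinearMap, by
    ext x
    exact congr((ker f).liftQ g h $(quotKerEquivRange_symm_apply_image f x _))⟩

end LinearMap

section

variable {𝕜 E X Y : Type*} [RCLike 𝕜] [NormedAddCommGroup E] [NormedSpace 𝕜 E]
  [NormedAddCommGroup X] [NormedSpace 𝕜 X] [NormedAddCommGroup Y] [NormedSpace 𝕜 Y]

theorem exists_norm_le_of_forall_dual_bounded {ι : Type*} (v : ι → E)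
    (hv : ∀ f : StrongDual 𝕜 E, ∃ C, ∀ i, ‖f (v i)‖ ≤ C) : ∃ C, ∀ i, ‖v i‖ ≤ C := by
  obtain ⟨C, hC⟩ := banach_steinhaus (g := fun i ↦ inclusionInDoubleDual 𝕜 E (v i)) hv
  exact ⟨C, fun i ↦ (inclusionInDoubleDualLi 𝕜).norm_map (v i) ▸ hC i⟩

namespace ContinuousLinearMap

theorem exists_comp_eq_of_norm_le_mul (S : X →L[𝕜] Y) (φ : StrongDual 𝕜 X) (C : ℝ)
    (hφ : ∀ ξ, ‖φ ξ‖ ≤ C * ‖S ξ‖) : ∃ ψ : StrongDual 𝕜 Y, ψ.comp S = φ := by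
  have hker : LinearMap.ker (S : X →ₗ[𝕜] Y) ≤ LinearMap.ker (φ : X →ₗ[𝕜] 𝕜) := fun ξ hξ ↦ by
    simpa [show S ξ = 0 from hξ] using hφ ξ
  obtain ⟨ψ₀, hψ₀⟩ := LinearMap.exists_comp_rangeRestrict_eq_of_ker_le _ _ hker
  have hψ₀_apply : ∀ ξ, ψ₀ ⟨S ξ, ξ, rfl⟩ = φ ξ := fun ξ ↦ congr($hψ₀ ξ)
  have hbound : ∀ y, ‖ψ₀ y‖ ≤ C * ‖y‖ := by
    rintro ⟨-, ξ, rfl⟩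
    exact hψ₀_apply ξ ▸ hφ ξ
  obtain ⟨ψ, hψ, -⟩ := exists_extension_norm_eq _ (ψ₀.mkContinuous C hbound)
  exact ⟨ψ, ext fun ξ ↦ (hψ ⟨S ξ, ξ, rfl⟩).trans (hψ₀_apply ξ)⟩

theorem exists_norm_le_mul_of_forall_dual_comp_eq (S T : X →L[𝕜] Y)
    (h : ∀ g : StrongDual 𝕜 Y, ∃ ψ : StrongDual 𝕜 Y, g.comp T = ψ.comp S) :
    ∃ C, ∀ ξ, ‖T ξ‖ ≤ C * ‖S ξ‖ := by
  have hker : ∀ ξ, S ξ = 0 → T ξ = 0 := fun ξ hξ ↦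
    SeparatingDual.eq_zero_of_forall_dual_eq_zero fun g ↦ by
      obtain ⟨ψ, hψ⟩ := h g
      simpa [hξ] using congr($hψ ξ)
  obtain ⟨C, hC⟩ := exists_norm_le_of_forall_dual_bounded (𝕜 := 𝕜)
    (fun ξ ↦ ((‖S ξ‖⁻¹ : ℝ) : 𝕜) • T ξ) fun g ↦ by
      obtain ⟨ψ, hψ⟩ := h g
      have hψ' : ∀ ξ, g (T ξ) = ψ (S ξ) := fun ξ ↦ congr($hψ ξ)
      refine ⟨‖ψ‖, fun ξ ↦ ?_⟩
      calc ‖g (((‖S ξ‖⁻¹ : ℝ) : 𝕜) • T ξ)‖ = ‖ψ (S ξ)‖ * ‖S ξ‖⁻¹ := by simp [hψ', mul_comm]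
        _ ≤ ‖ψ‖ * (‖S ξ‖ * ‖S ξ‖⁻¹) := by rw [← mul_assoc]; gcongr; exact ψ.le_opNorm _
        _ ≤ ‖ψ‖ := mul_le_of_le_one_right (norm_nonneg _) mul_inv_le_one
  refine ⟨C, fun ξ ↦ ?_⟩
  rcases eq_or_ne (S ξ) 0 with h0 | h0
  · simp [hker ξ h0, h0]
  · have hξ : ‖S ξ‖⁻¹ * ‖T ξ‖ ≤ C := by simpa [norm_smul] using hC ξ
    rwa [inv_mul_le_iff₀ (norm_pos_iff.2 h0), mul_comm] at hξ

end ContinuousLinearMap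

end

theorem stmt_9_general {X Y : Type*}
    [NormedAddCommGroup X] [NormedSpace ℂ X]
    [NormedAddCommGroup Y] [NormedSpace ℂ Y]
    (S T : X →L[ℂ] Y) :
    (∀ g : Y →L[ℂ] ℂ, ∃ h : Y →L[ℂ] ℂ, g.comp T = h.comp S)
      ↔ ∃ κ : ℝ, 0 < κ ∧ ∀ ξ : X, ‖T ξ‖ ≤ κ * ‖S ξ‖ := by
  constructor
  · intro h
    obtain ⟨C, hC⟩ := S.exists_norm_le_mul_of_forall_dual_comp_eq T h
    exact ⟨max C 1, by positivity, fun ξ ↦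
      (hC ξ).trans (mul_le_mul_of_nonneg_right (le_max_left C 1) (norm_nonneg _))⟩
  · rintro ⟨κ, -, hκ⟩ g
    obtain ⟨ψ, hψ⟩ := S.exists_comp_eq_of_norm_le_mul (g.comp T) (‖g‖ * κ) fun ξ ↦
      calc ‖g (T ξ)‖ ≤ ‖g‖ * ‖T ξ‖ := g.le_opNorm _
        _ ≤ ‖g‖ * κ * ‖S ξ‖ := by rw [mul_assoc]; gcongr; exact hκ ξ
    exact ⟨ψ, hψ.symm⟩

/-- For bounded operators `S, T : X → Y` between Banach spaces, the range
inclusion `T*(Y*) ⊆ S*(Y*)` holds iff `‖Tξ‖ ≤ κ‖Sξ‖` for some `κ > 0` and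
all `ξ ∈ X`. -/
theorem stmt_9 {X Y : Type*}
    [NormedAddCommGroup X] [NormedSpace ℂ X] [CompleteSpace X]
    [NormedAddCommGroup Y] [NormedSpace ℂ Y] [CompleteSpace Y]
    (S T : X →L[ℂ] Y) :
    (∀ g : Y →L[ℂ] ℂ, ∃ h : Y →L[ℂ] ℂ, g.comp T = h.comp S)
      ↔ ∃ κ : ℝ, 0 < κ ∧ ∀ ξ : X, ‖T ξ‖ ≤ κ * ‖S ξ‖ :=
  stmt_9_general S T
end

section
/- Let X, Y be Banach spaces and S, T : X → Y bounded linear operators with ‖Tx‖ ≤ ‖Sx‖ for all x ∈ X. Then the second adjoints satisfy ‖T**v‖ ≤ ‖S**v‖ for all v ∈ X**. -/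
/-!
Since `‖T x‖ ≤ ‖S x‖`, every functional `g ∘ T` is bounded by `‖g‖` on the range of `S`, so it
descends to a functional on `range S` of norm at most `‖g‖`; by Hahn–Banach this extends to some
`f` on `Y` with `‖f‖ ≤ ‖g‖` and `T* g = g ∘ T = f ∘ S = S* f`. Hence
`|T** v g| = |S** v f| ≤ ‖S** v‖ ‖g‖` for every `g`.
-/

open ContinuousLinearMap

section
variable {𝕜 X Y : Type*} [RCLike 𝕜] [NormedAddCommGroup X] [NormedSpace 𝕜 X]
  [NormedAddCommGroup Y] [NormedSpace 𝕜 Y]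

theorem ContinuousLinearMap.exists_norm_le_comp_eq_of_norm_le_mul (S : X →L[𝕜] Y)
    (φ : StrongDual 𝕜 X) {C : ℝ} (hC : 0 ≤ C) (h : ∀ x, ‖φ x‖ ≤ C * ‖S x‖) :
    ∃ f : StrongDual 𝕜 Y, ‖f‖ ≤ C ∧ f.comp S = φ := by
  let S' : X →ₗ[𝕜] Y := S
  have hker : LinearMap.ker S' ≤ LinearMap.ker (φ : X →ₗ[𝕜] 𝕜) := fun x hx => by
    have : S x = 0 := hx
    simpa [this] using h x
  let ψ : LinearMap.range S' →ₗ[𝕜] 𝕜 :=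
    (LinearMap.ker S').liftQ φ hker ∘ₗ S'.quotKerEquivRange.symm.toLinearMap
  have hψ (x : X) : ψ ⟨S' x, x, rfl⟩ = φ x := by
    simp only [ψ, LinearMap.comp_apply, LinearEquiv.coe_coe,
      S'.quotKerEquivRange_symm_apply_image x ⟨x, rfl⟩]
    rfl
  have hψ_bound : ∀ y, ‖ψ y‖ ≤ C * ‖y‖ := by
    rintro ⟨_, x, rfl⟩
    exact (congrArg norm (hψ x)).trans_le (h x)
  obtain ⟨f, hf_ext, hf_norm⟩ := exists_extension_norm_eq _ (ψ.mkContinuous C hψ_bound)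
  refine ⟨f, hf_norm ▸ ψ.mkContinuous_norm_le hC hψ_bound, ?_⟩
  ext x
  exact (hf_ext ⟨S' x, x, rfl⟩).trans (hψ x)

end

theorem stmt_10_general {X Y : Type*}
    [NormedAddCommGroup X] [NormedSpace ℂ X]
    [NormedAddCommGroup Y] [NormedSpace ℂ Y]
    (S T : X →L[ℂ] Y)
    (h : ∀ x : X, ‖T x‖ ≤ ‖S x‖) :
    ∀ v : (X →L[ℂ] ℂ) →L[ℂ] ℂ,
      ‖v.comp ((ContinuousLinearMap.compL ℂ X Y ℂ).flip T)‖
        ≤ ‖v.comp ((ContinuousLinearMap.compL ℂ X Y ℂ).flip S)‖ := by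
  intro v
  refine opNorm_le_bound _ (norm_nonneg _) fun g => ?_
  obtain ⟨f, hf_norm, hf_comp⟩ := exists_norm_le_comp_eq_of_norm_le_mul S (g.comp T)
    (norm_nonneg g) fun x => (g.le_opNorm (T x)).trans (by gcongr; exact h x)
  have hvg : v.comp ((compL ℂ X Y ℂ).flip T) g = v.comp ((compL ℂ X Y ℂ).flip S) f := by
    simp [hf_comp]
  calc ‖v.comp ((compL ℂ X Y ℂ).flip T) g‖
      = ‖v.comp ((compL ℂ X Y ℂ).flip S) f‖ := by rw [hvg]
    _ ≤ ‖v.comp ((compL ℂ X Y ℂ).flip S)‖ * ‖f‖ := le_opNorm _ _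
    _ ≤ ‖v.comp ((compL ℂ X Y ℂ).flip S)‖ * ‖g‖ := by gcongr

/-- If `‖Tx‖ ≤ ‖Sx‖` for all `x`, then the second adjoints satisfy
`‖T**v‖ ≤ ‖S**v‖` for all `v ∈ X**`.  Here the dual map of `T` is
`g ↦ g ∘ T`, implemented via `compL`, and `T** v = v ∘ T*`. -/
theorem stmt_10 {X Y : Type*}
    [NormedAddCommGroup X] [NormedSpace ℂ X] [CompleteSpace X]
    [NormedAddCommGroup Y] [NormedSpace ℂ Y] [CompleteSpace Y]
    (S T : X →L[ℂ] Y)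
    (h : ∀ x : X, ‖T x‖ ≤ ‖S x‖) :
    ∀ v : (X →L[ℂ] ℂ) →L[ℂ] ℂ,
      ‖v.comp ((ContinuousLinearMap.compL ℂ X Y ℂ).flip T)‖
        ≤ ‖v.comp ((ContinuousLinearMap.compL ℂ X Y ℂ).flip S)‖ :=
  stmt_10_general S T h
end

section
/- Let a be a hyponormal operator on a complex Hilbert space H, let λ₁ ≠ λ₂ be distinct approximate eigenvalues of a, and let (ξ₁ₙ), (ξ₂ₙ) be sequences of unit vectors with ‖(a − λᵢ)ξᵢₙ‖ → 0 for i = 1, 2. Then ⟨ξ₁ₙ, ξ₂ₙ⟩ → 0 as n → ∞. -/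
/-!
Shifting `a` by a scalar `λ` does not change its self-commutator `a⋆a - aa⋆`, and hyponormality
says exactly that this commutator is positive; so `‖(a - λ)⋆ξ‖ ≤ ‖(a - λ)ξ‖` for all `λ`. Hence
`(λ₁ - λ₂)⟪ξ₁, ξ₂⟫ = ⟪ξ₁, (a - λ₂)ξ₂⟫ - ⟪(a - λ₁)⋆ξ₁, ξ₂⟫` is bounded by
`‖(a - λ₁)ξ₁‖ + ‖(a - λ₂)ξ₂‖` for unit vectors, which tends to `0`.
-/

open scoped InnerProductSpace ComplexConjugate
open Filter Topology ContinuousLinearMap RCLike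

theorem star_mul_self_sub_self_mul_star_sub_algebraMap {R A : Type*} [CommSemiring R] [StarRing R]
    [Ring A] [StarRing A] [Algebra R A] [StarModule R A] (a : A) (l : R) :
    star (a - algebraMap R A l) * (a - algebraMap R A l)
      - (a - algebraMap R A l) * star (a - algebraMap R A l) = star a * a - a * star a := by
  rw [star_sub, ← algebraMap_star_comm]
  simp only [sub_mul, mul_sub, ← map_mul, Algebra.commutes (star l) a,
    Algebra.commutes l (star a), mul_comm l]
  abel

section Hyponormal

variable {𝕜 E : Type*} [RCLike 𝕜] [NormedAddCommGroup E] [InnerProductSpace 𝕜 E] [CompleteSpace E]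

def IsHyponormal (a : E →L[𝕜] E) : Prop := ∀ x, ‖adjoint a x‖ ≤ ‖a x‖

theorem norm_sq_apply_sub_norm_sq_adjoint_apply (a : E →L[𝕜] E) (x : E) :
    ‖a x‖ ^ 2 - ‖adjoint a x‖ ^ 2 = re ⟪(star a * a - a * star a) x, x⟫_𝕜 := by
  rw [apply_norm_sq_eq_inner_adjoint_left, apply_norm_sq_eq_inner_adjoint_left, adjoint_adjoint,
    star_eq_adjoint, sub_apply, inner_sub_left, map_sub]
  rfl

theorem isHyponormal_iff_re_inner_nonneg (a : E →L[𝕜] E) :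
    IsHyponormal a ↔ ∀ x, 0 ≤ re ⟪(star a * a - a * star a) x, x⟫_𝕜 := by
  refine forall_congr' fun x => ?_
  rw [← norm_sq_apply_sub_norm_sq_adjoint_apply, sub_nonneg]
  exact (pow_le_pow_iff_left₀ (norm_nonneg _) (norm_nonneg _) two_ne_zero).symm

theorem IsHyponormal.sub_algebraMap {a : E →L[𝕜] E} (ha : IsHyponormal a) (l : 𝕜) :
    IsHyponormal (a - algebraMap 𝕜 _ l) := by
  rw [isHyponormal_iff_re_inner_nonneg] at ha ⊢
  rwa [star_mul_self_sub_self_mul_star_sub_algebraMap]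

theorem IsHyponormal.norm_adjoint_apply_sub_le {a : E →L[𝕜] E} (ha : IsHyponormal a) (l : 𝕜)
    (x : E) : ‖adjoint a x - conj l • x‖ ≤ ‖a x - l • x‖ := by
  simpa [Algebra.algebraMap_eq_smul_one, ← star_eq_adjoint] using ha.sub_algebraMap l x

theorem norm_sub_mul_norm_inner_le (a : E →L[𝕜] E) (l₁ l₂ : 𝕜) (x y : E) :
    ‖l₁ - l₂‖ * ‖⟪x, y⟫_𝕜‖ ≤ ‖adjoint a x - conj l₁ • x‖ * ‖y‖ + ‖x‖ * ‖a y - l₂ • y‖ := by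
  have key : (l₁ - l₂) * ⟪x, y⟫_𝕜 = ⟪x, a y - l₂ • y⟫_𝕜 - ⟪adjoint a x - conj l₁ • x, y⟫_𝕜 := by
    rw [inner_sub_left, inner_sub_right, inner_smul_left, inner_smul_right, adjoint_inner_left,
      conj_conj]
    ring
  calc ‖l₁ - l₂‖ * ‖⟪x, y⟫_𝕜‖ = ‖⟪x, a y - l₂ • y⟫_𝕜 - ⟪adjoint a x - conj l₁ • x, y⟫_𝕜‖ := by
        rw [← norm_mul, key]
    _ ≤ ‖⟪adjoint a x - conj l₁ • x, y⟫_𝕜‖ + ‖⟪x, a y - l₂ • y⟫_𝕜‖ :=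
        (norm_sub_le _ _).trans_eq (add_comm _ _)
    _ ≤ _ := add_le_add (norm_inner_le_norm _ _) (norm_inner_le_norm _ _)

theorem IsHyponormal.norm_sub_mul_norm_inner_le {a : E →L[𝕜] E} (ha : IsHyponormal a)
    (l₁ l₂ : 𝕜) (x y : E) :
    ‖l₁ - l₂‖ * ‖⟪x, y⟫_𝕜‖ ≤ ‖a x - l₁ • x‖ * ‖y‖ + ‖x‖ * ‖a y - l₂ • y‖ :=
  (_root_.norm_sub_mul_norm_inner_le a l₁ l₂ x y).trans <| by
    gcongr; exact ha.norm_adjoint_apply_sub_le l₁ x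

end Hyponormal

/-- For a hyponormal `a` and distinct approximate eigenvalues `λ₁ ≠ λ₂`
with approximating unit-vector sequences, the inner products
`⟨ξ₁ₙ, ξ₂ₙ⟩` tend to `0`. -/
theorem stmt_15 {H : Type*} [NormedAddCommGroup H] [InnerProductSpace ℂ H]
    [CompleteSpace H] (a : H →L[ℂ] H)
    (hyp : ∀ ξ : H, ‖(ContinuousLinearMap.adjoint a) ξ‖ ≤ ‖a ξ‖)
    (l₁ l₂ : ℂ) (hne : l₁ ≠ l₂) (ξ₁ ξ₂ : ℕ → H)
    (h₁u : ∀ n, ‖ξ₁ n‖ = 1) (h₂u : ∀ n, ‖ξ₂ n‖ = 1)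
    (h₁ : Tendsto (fun n => ‖a (ξ₁ n) - l₁ • ξ₁ n‖) atTop (𝓝 0))
    (h₂ : Tendsto (fun n => ‖a (ξ₂ n) - l₂ • ξ₂ n‖) atTop (𝓝 0)) :
    Tendsto (fun n => (⟪ξ₁ n, ξ₂ n⟫_ℂ)) atTop (𝓝 0) := by
  have hgap : 0 < ‖l₁ - l₂‖ := norm_pos_iff.2 (sub_ne_zero.2 hne)
  have hbound (n : ℕ) : ‖⟪ξ₁ n, ξ₂ n⟫_ℂ‖
      ≤ (‖a (ξ₁ n) - l₁ • ξ₁ n‖ + ‖a (ξ₂ n) - l₂ • ξ₂ n‖) / ‖l₁ - l₂‖ := by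
    rw [le_div_iff₀' hgap]
    simpa only [h₁u, h₂u, mul_one, one_mul] using
      IsHyponormal.norm_sub_mul_norm_inner_le hyp l₁ l₂ (ξ₁ n) (ξ₂ n)
  refine squeeze_zero_norm hbound ?_
  simpa only [add_zero, zero_div] using (h₁.add h₂).div_const ‖l₁ - l₂‖
end

section
/- Let f be a Lipschitz function with constant κ on the spectrum σ(a) of a normal operator a ∈ B(H). Then for every state ω on B(H), D_ω(f(a)) ≤ κ² D_ω(a), where D_ω(x) = ω(x*x) − |ω(x)|². -/
/-!
Through the continuous functional calculus, `ω` becomes a state `φ` on `C(σ(a), ℂ)`, and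
`D_ω(f(a))`, `D_ω(a)` become the variances of `f` and of the identity under `φ`. A variance is half
the mean squared difference of two independent samples: `y ↦ φ(|g - g(y)|²)` is again a continuous
function on `σ(a)`, and applying `φ` to it gives `2 D_φ(g)`. Applying `φ` in both variables to the
pointwise inequality `|f x - f y|² ≤ κ² |x - y|²` therefore gives `2 D(f(a)) ≤ 2 κ² D(a)`.
-/

open ComplexOrder

noncomputable def functionalVariance {A F : Type*} [Mul A] [Star A] [FunLike F A ℂ]
    (ω : F) (x : A) : ℝ :=
  (ω (star x * x)).re - ‖ω x‖ ^ 2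

lemma Complex.star_mul_self_le_of_norm_le {u v : ℂ} {κ : ℝ} (h : ‖v‖ ≤ κ * ‖u‖) :
    star v * v ≤ (κ ^ 2 : ℝ) * (star u * u) := by
  have := pow_le_pow_left₀ (norm_nonneg v) h 2
  simp only [Complex.star_def, Complex.conj_mul']
  exact_mod_cast (by linarith : ‖v‖ ^ 2 ≤ κ ^ 2 * ‖u‖ ^ 2)

namespace PositiveLinearMap

noncomputable def ofStarMulSelfNonneg {A : Type*} [CStarAlgebra A] [PartialOrder A]
    [StarOrderedRing A] (ω : A →ₗ[ℂ] ℂ) (hω : ∀ x, 0 ≤ ω (star x * x)) : A →ₚ[ℂ] ℂ :=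
  .mk₀ ω fun x hx => by
    obtain ⟨b, rfl⟩ := CStarAlgebra.nonneg_iff_eq_star_mul_self.mp hx
    exact hω b

variable {X : Type*} [TopologicalSpace X] [CompactSpace X] (φ : C(X, ℂ) →ₚ[ℂ] ℂ)

noncomputable def secondMomentAbout (g : C(X, ℂ)) : C(X, ℂ) :=
  algebraMap ℂ C(X, ℂ) (φ (star g * g)) - φ g • star g - star (φ g) • g + star g * g

lemma map_star_sub_algebraMap_mul (hφ : φ 1 = 1) (g : C(X, ℂ)) (c : ℂ) :
    φ (star (g - algebraMap ℂ _ c) * (g - algebraMap ℂ _ c))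
      = φ (star g * g) - star c * φ g - c * star (φ g) + star c * c := by
  simp only [Algebra.algebraMap_eq_smul_one, star_sub, star_smul, star_one, sub_mul, mul_sub,
    smul_mul_assoc, one_mul, mul_smul_comm, mul_one, map_sub, map_smul, hφ, smul_eq_mul, map_star]
  ring

lemma secondMomentAbout_apply (hφ : φ 1 = 1) (g : C(X, ℂ)) (y : X) :
    φ.secondMomentAbout g y
      = φ (star (g - algebraMap ℂ _ (g y)) * (g - algebraMap ℂ _ (g y))) := by
  rw [map_star_sub_algebraMap_mul φ hφ]
  simp [secondMomentAbout]
  ring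

lemma map_secondMomentAbout (hφ : φ 1 = 1) (g : C(X, ℂ)) :
    φ (φ.secondMomentAbout g) = 2 * (φ (star g * g) - φ g * star (φ g)) := by
  simp only [secondMomentAbout, map_add, map_sub, map_smul, Algebra.algebraMap_eq_smul_one, hφ,
    map_star, smul_eq_mul, mul_one]
  ring

theorem functionalVariance_le_of_norm_sub_le (hφ : φ 1 = 1) {f g : C(X, ℂ)} {κ : ℝ}
    (h : ∀ x y, ‖f x - f y‖ ≤ κ * ‖g x - g y‖) :
    functionalVariance φ f ≤ κ ^ 2 * functionalVariance φ g := by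
  have hpt : 0 ≤ ((κ ^ 2 : ℝ) : ℂ) • φ.secondMomentAbout g - φ.secondMomentAbout f := by
    refine ContinuousMap.le_def.mpr fun y => ?_
    simp only [ContinuousMap.zero_apply, ContinuousMap.sub_apply, ContinuousMap.smul_apply,
      secondMomentAbout_apply φ hφ]
    rw [← smul_eq_mul, ← map_smul, ← map_sub]
    refine φ.map_nonneg fun x => ?_
    simpa using sub_nonneg.mpr (Complex.star_mul_self_le_of_norm_le (h x y))
  have hre := (Complex.nonneg_iff.mp (φ.map_nonneg hpt)).1
  simp only [map_sub, map_smul, map_secondMomentAbout φ hφ, smul_eq_mul, Complex.star_def,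
    Complex.mul_conj, Complex.normSq_eq_norm_sq, Complex.sub_re, Complex.re_ofReal_mul] at hre
  norm_num [← Complex.ofReal_pow] at hre
  rw [functionalVariance, functionalVariance]
  linarith

end PositiveLinearMap

theorem stmt_17_general {H : Type*} [NormedAddCommGroup H] [InnerProductSpace ℂ H]
    [CompleteSpace H] (a : H →L[ℂ] H) [IsStarNormal a]
    (f : ℂ → ℂ) (κ : ℝ)
    (hf : ∀ lam ∈ spectrum ℂ a, ∀ mu ∈ spectrum ℂ a,
      ‖f mu - f lam‖ ≤ κ * ‖mu - lam‖)
    (ω : (H →L[ℂ] H) →ₗ[ℂ] ℂ)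
    (hω1 : ω 1 = 1)
    (hωpos : ∀ x : H →L[ℂ] H, ∃ r : ℝ, 0 ≤ r ∧ ω (star x * x) = (r : ℂ)) :
    (ω (star (cfc f a) * cfc f a)).re - ‖ω (cfc f a)‖ ^ 2
      ≤ κ ^ 2 * ((ω (star a * a)).re - ‖ω a‖ ^ 2) := by
  have hfc : ContinuousOn f (spectrum ℂ a) := by
    refine (LipschitzOnWith.of_dist_le_mul (K := κ.toNNReal) fun mu hmu lam hlam => ?_)
      |>.continuousOn
    simpa only [dist_eq_norm] using (hf lam hlam mu hmu).trans
      (mul_le_mul_of_nonneg_right (Real.le_coe_toNNReal κ) (norm_nonneg _))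
  have hω : ∀ x : H →L[ℂ] H, 0 ≤ ω (star x * x) := fun x => by
    obtain ⟨r, hr, hx⟩ := hωpos x
    exact hx ▸ Complex.zero_le_real.mpr hr
  let φ : C(spectrum ℂ a, ℂ) →ₚ[ℂ] ℂ :=
    (PositiveLinearMap.ofStarMulSelfNonneg ω hω).comp
      (.ofClass (cfcHom (show IsStarNormal a from inferInstance)))
  have hvar : ∀ g, functionalVariance φ g = functionalVariance ω (cfcHom _ g) := fun g => by
    rw [functionalVariance, functionalVariance, ← map_star, ← map_mul]
    rfl
  have key := φ.functionalVariance_le_of_norm_sub_le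
    (show ω (cfcHom _ 1) = 1 by rw [map_one, hω1])
    (f := ⟨_, hfc.domRestrict⟩) (g := (ContinuousMap.id ℂ).restrict _) fun x y => hf _ y.2 _ x.2
  rwa [hvar, hvar, ← cfc_apply f a, cfcHom_id] at key

/-- If `f` is `κ`-Lipschitz on the spectrum of a normal operator `a`, then
for every state `ω` on `B(H)`, `D_ω(f(a)) ≤ κ² D_ω(a)`, where
`D_ω(x) = ω(x*x) − |ω(x)|²`. -/
theorem stmt_17 {H : Type*} [NormedAddCommGroup H] [InnerProductSpace ℂ H]
    [CompleteSpace H] (a : H →L[ℂ] H) [IsStarNormal a]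
    (f : ℂ → ℂ) (κ : ℝ) (hκ : 0 < κ)
    (hf : ∀ lam ∈ spectrum ℂ a, ∀ mu ∈ spectrum ℂ a,
      ‖f mu - f lam‖ ≤ κ * ‖mu - lam‖)
    (ω : (H →L[ℂ] H) →ₗ[ℂ] ℂ)
    (hω1 : ω 1 = 1)
    (hωpos : ∀ x : H →L[ℂ] H, ∃ r : ℝ, 0 ≤ r ∧ ω (star x * x) = (r : ℂ)) :
    (ω (star (cfc f a) * cfc f a)).re - ‖ω (cfc f a)‖ ^ 2
      ≤ κ ^ 2 * ((ω (star a * a)).re - ‖ω a‖ ^ 2) :=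
  stmt_17_general a f κ hf ω hω1 hωpos
end

section
/- Let a be a diagonal operator on a Hilbert space H with orthonormal basis (e_i) and a·e_i = λ_i e_i, and let f : {λ_i} → ℂ be a function. Let b be the diagonal operator with b·e_i = f(λ_i)e_i. If the divided-difference matrix Λ with entries Λ_{ij} = (f(λ_i) − f(λ_j))/(λ_i − λ_j) for λ_i ≠ λ_j and 0 otherwise is a Schur multiplier on B(H) with norm κ, then ‖[b, x]‖ ≤ κ‖[a, x]‖ for all x ∈ B(H). -/
open scoped InnerProductSpace

/-! The commutators `[a, x]` and `[b, x]` have matrix entries `(λᵢ - λⱼ) xᵢⱼ` and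
`(f λᵢ - f λⱼ) xᵢⱼ`. Writing the divided difference as `slope f λⱼ λᵢ`, which vanishes when
`λᵢ = λⱼ`, gives `(f λᵢ - f λⱼ) = slope f λⱼ λᵢ * (λᵢ - λⱼ)` in every case, so `[b, x]` is the
Schur product of `Λ` with `[a, x]`, and its norm is at most `κ ‖[a, x]‖`. -/

theorem ite_div_sub_eq_slope {K : Type*} [Field K] (g : K → K) (s t : K) [Decidable (s = t)] :
    (if s = t then 0 else (g s - g t) / (s - t)) = slope g t s := by
  split_ifs with h
  · rw [h, slope_same]
  · rw [slope_def_field]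

namespace HilbertBasis

variable {ι 𝕜 E : Type*} [RCLike 𝕜] [NormedAddCommGroup E] [InnerProductSpace 𝕜 E]
  (b : HilbertBasis ι 𝕜 E)

theorem ext_inner_left {v w : E} (h : ∀ i, ⟪b i, v⟫_𝕜 = ⟪b i, w⟫_𝕜) : v = w :=
  b.repr.injective <| lp.ext <| funext fun i => by simpa only [b.repr_apply_apply] using h i

theorem ext_continuousLinearMap {F : Type*} [NormedAddCommGroup F] [NormedSpace 𝕜 F]
    {S T : E →L[𝕜] F} (h : ∀ i, S (b i) = T (b i)) : S = T :=
  ContinuousLinearMap.ext_on (Submodule.dense_iff_topologicalClosure_eq_top.2 b.dense_span)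
    (Set.forall_mem_range.2 h)

theorem ext_continuousLinearMap_inner {S T : E →L[𝕜] E}
    (h : ∀ i j, ⟪b i, S (b j)⟫_𝕜 = ⟪b i, T (b j)⟫_𝕜) : S = T :=
  b.ext_continuousLinearMap fun j => b.ext_inner_left fun i => h i j

variable {b} {a : E →L[𝕜] E} {d : ι → 𝕜}

theorem inner_apply_of_apply_eq_smul (ha : ∀ i, a (b i) = d i • b i) (i : ι) (w : E) :
    ⟪b i, a w⟫_𝕜 = d i * ⟪b i, w⟫_𝕜 := by
  classical
  suffices (innerSL 𝕜 (b i)).comp a = d i • innerSL 𝕜 (b i) from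
    DFunLike.congr_fun this w
  refine b.ext_continuousLinearMap fun k => ?_
  simp only [ContinuousLinearMap.comp_apply, smul_apply, innerSL_apply_apply,
    ha k, inner_smul_right, orthonormal_iff_ite.1 b.orthonormal, smul_eq_mul]
  split_ifs with h <;> simp [h]

theorem inner_commutator_of_apply_eq_smul (ha : ∀ i, a (b i) = d i • b i) (x : E →L[𝕜] E)
    (i j : ι) : ⟪b i, (a * x - x * a) (b j)⟫_𝕜 = (d i - d j) * ⟪b i, x (b j)⟫_𝕜 := by
  rw [sub_apply, mul_apply_eq_comp, mul_apply_eq_comp,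
    inner_sub_right, inner_apply_of_apply_eq_smul ha, ha, map_smul, inner_smul_right, sub_mul]

end HilbertBasis

theorem stmt_18_general {H : Type*} [NormedAddCommGroup H] [InnerProductSpace ℂ H]
    (e : HilbertBasis ℕ ℂ H)
    (lam : ℕ → ℂ) (f : ℂ → ℂ) (a b : H →L[ℂ] H)
    (ha : ∀ i, a (e i) = lam i • e i)
    (hb : ∀ i, b (e i) = f (lam i) • e i)
    (κ : ℝ)
    (hSchur : ∀ x : H →L[ℂ] H, ∃ y : H →L[ℂ] H,
      (∀ i j, (⟪e i, y (e j)⟫_ℂ)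
        = (if lam i = lam j then 0 else (f (lam i) - f (lam j)) / (lam i - lam j))
            * (⟪e i, x (e j)⟫_ℂ)) ∧ ‖y‖ ≤ κ * ‖x‖) :
    ∀ x : H →L[ℂ] H, ‖b * x - x * b‖ ≤ κ * ‖a * x - x * a‖ := by
  intro x
  obtain ⟨y, hy, hy_norm⟩ := hSchur (a * x - x * a)
  suffices b * x - x * b = y from this ▸ hy_norm
  refine e.ext_continuousLinearMap_inner fun i j => ?_
  rw [hy, e.inner_commutator_of_apply_eq_smul ha, e.inner_commutator_of_apply_eq_smul hb,
    ite_div_sub_eq_slope, ← mul_assoc, mul_comm (slope f _ _), ← smul_eq_mul (lam i - lam j),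
    sub_smul_slope, vsub_eq_sub]

/-- If `a, b` are diagonal operators w.r.t. an orthonormal basis `(e i)`, with
`a e_i = λ_i e_i`, `b e_i = f(λ_i) e_i`, and the divided-difference matrix
`Λ_{ij} = (f(λ_i) − f(λ_j))/(λ_i − λ_j)` (with `0` on coincidences) is a Schur
multiplier on `B(H)` with norm `κ`, then `‖[b, x]‖ ≤ κ‖[a, x]‖` for all `x`. -/
theorem stmt_18 {H : Type*} [NormedAddCommGroup H] [InnerProductSpace ℂ H]
    [CompleteSpace H] (e : HilbertBasis ℕ ℂ H)
    (lam : ℕ → ℂ) (f : ℂ → ℂ) (a b : H →L[ℂ] H)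
    (ha : ∀ i, a (e i) = lam i • e i)
    (hb : ∀ i, b (e i) = f (lam i) • e i)
    (κ : ℝ)
    (hSchur : ∀ x : H →L[ℂ] H, ∃ y : H →L[ℂ] H,
      (∀ i j, (⟪e i, y (e j)⟫_ℂ)
        = (if lam i = lam j then 0 else (f (lam i) - f (lam j)) / (lam i - lam j))
            * (⟪e i, x (e j)⟫_ℂ)) ∧ ‖y‖ ≤ κ * ‖x‖) :
    ∀ x : H →L[ℂ] H, ‖b * x - x * b‖ ≤ κ * ‖a * x - x * a‖ :=
  stmt_18_general e lam f a b ha hb κ hSchur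
end
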